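/- arXiv:1008.4076 — 3 statements merged into one kernel-verified Lean document; each statement's English description precedes it below -/
import Mathlib

section
/- Let γ^1_j : A → A (0 ≤ j < n) be k-linear maps with γ^1_j(1) = δ_{1j}. Set γ^0_j := δ_{0j}·id and γ^r_j := Σ_{u_1+⋯+u_r=j} γ^1_{u_1}∘⋯∘γ^1_{u_r} for r > 1, j < n. If γ^n_j = 0 for all j < n and γ^1_j(ab) = Σ_{i=0}^{n-1} γ^1_i(a)γ^i_j(b) for all a,b ∈ A and j < n, then the map s(y^r⊗a) := Σ_j γ^r_j(a)⊗y^j is a twisting map C⊗A → A⊗C, where C = k[y]/⟨y^n⟩. -/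
/-!
Let `Γ` be the operator `a ⊗ d ↦ Σ_j γ^1_j(a) ⊗ y^j d` on `A ⊗ C`; it commutes with right
multiplication by `C`. By induction `Γ^r(a ⊗ d) = Σ_j γ^r_j(a) ⊗ y^j d`, so `Γ^n = 0` and
`c ↦ c(Γ)` is an algebra map out of `C = k[y]/⟨y^n⟩`. The twisting map is
`s(c ⊗ a) = c(Γ)(a ⊗ 1)`: it is unital because `c ↦ c(Γ)` is, and compatible with `μ_C` because
`c ↦ c(Γ)` is multiplicative and each `c(Γ)` commutes with right multiplication. Compatibility
with `μ_A` on `c = y^r` is the identity `γ^r_j(ab) = Σ_i γ^r_i(a) γ^i_j(b)`, which follows from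
the product law by induction on `r`, using `γ^{l+i}_j = 0` for `l + i ≥ n`.
-/

open TensorProduct

/-- A twisting map `s : C ⊗ A → A ⊗ C`. -/
def IsTwistingMap (k A C : Type*) [CommRing k] [Ring A] [Ring C] [Algebra k A]
    [Algebra k C] (s : C ⊗[k] A →ₗ[k] A ⊗[k] C) : Prop :=
  (∀ a : A, s ((1 : C) ⊗ₜ[k] a) = a ⊗ₜ[k] (1 : C)) ∧
  (∀ c : C, s (c ⊗ₜ[k] (1 : A)) = (1 : A) ⊗ₜ[k] c) ∧
  (∀ (c c' : C) (a : A), s ((c * c') ⊗ₜ[k] a) =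
    (LinearMap.lTensor A (LinearMap.mul' k C))
      ((TensorProduct.assoc k A C C)
        ((LinearMap.rTensor C s)
          ((TensorProduct.assoc k C A C).symm (c ⊗ₜ[k] (s (c' ⊗ₜ[k] a))))))) ∧
  (∀ (c : C) (a a' : A), s (c ⊗ₜ[k] (a * a')) =
    (LinearMap.rTensor C (LinearMap.mul' k A))
      ((TensorProduct.assoc k A A C).symm
        ((LinearMap.lTensor A s)
          ((TensorProduct.assoc k A C A)
            ((LinearMap.rTensor A s) ((c ⊗ₜ[k] a) ⊗ₜ[k] a'))))))

/-- The truncated polynomial algebra `k[y]/⟨y^n⟩`. -/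
abbrev TruncPoly (k : Type*) [CommRing k] (n : ℕ) : Type _ :=
  Polynomial k ⧸ Ideal.span {(Polynomial.X : Polynomial k) ^ n}

/-- The class of `y` in `k[y]/⟨y^n⟩`. -/
noncomputable def truncY (k : Type*) [CommRing k] (n : ℕ) : TruncPoly k n :=
  Ideal.Quotient.mk _ Polynomial.X

/-- The family `γ^r_j` generated by given maps `γ^1_j`:
`γ^0_j = δ_{0j}·id` and `γ^r_j = Σ_{u_1+⋯+u_r=j} γ^1_{u_1} ∘ ⋯ ∘ γ^1_{u_r}`. -/
noncomputable def gammaOf {k A : Type*} [CommRing k] [Ring A] [Algebra k A]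
    (γ1 : ℕ → Module.End k A) (r j : ℕ) : Module.End k A :=
  if r = 0 then (if j = 0 then 1 else 0)
  else ∑ u ∈ Finset.Nat.antidiagonalTuple r j,
    (List.ofFn fun i : Fin r => γ1 (u i)).prod

open Finset

theorem Finset.Nat.sum_antidiagonalTuple_succ {M : Type*} [AddCommMonoid M] (r j : ℕ)
    (f : (Fin (r + 1) → ℕ) → M) :
    ∑ u ∈ Nat.antidiagonalTuple (r + 1) j, f u =
      ∑ pq ∈ antidiagonal j, ∑ t ∈ Nat.antidiagonalTuple r pq.2, f (Fin.cons pq.1 t) := by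
  rw [sum_sigma']
  refine sum_nbij' (fun u => ⟨(u 0, ∑ i, Fin.tail u i), Fin.tail u⟩)
    (fun x => Fin.cons x.1.1 x.2) ?_ ?_ ?_ ?_ ?_
  · intro u hu
    simp_all [Nat.mem_antidiagonalTuple, Fin.sum_univ_succ, Fin.tail]
  · rintro ⟨⟨p, q⟩, t⟩ h
    simp_all [Nat.mem_antidiagonalTuple, Fin.sum_univ_succ]
  · intro u _
    exact Fin.cons_self_tail u
  · rintro ⟨⟨p, q⟩, t⟩ h
    simp_all [Nat.mem_antidiagonalTuple]
  · intro u _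
    rw [Fin.cons_self_tail]
theorem Finset.sum_range_sum_range_eq_sum_antidiagonal {M : Type*} [AddCommMonoid M] {n : ℕ}
    (f : ℕ → ℕ → M) (hf : ∀ i j, n ≤ i + j → f i j = 0) :
    ∑ i ∈ range n, ∑ j ∈ range n, f i j = ∑ m ∈ range n, ∑ p ∈ antidiagonal m, f p.1 p.2 := by
  rw [← sum_product', sum_sigma']
  refine sum_bij_ne_zero (fun p _ _ => ⟨p.1 + p.2, p⟩) ?_ ?_ ?_ (fun _ _ _ => rfl)
  · rintro ⟨i, j⟩ - h
    simpa using mt (hf i j) h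
  · simp
  · rintro ⟨m, i, j⟩ h hne
    simp only [mem_sigma, mem_range, HasAntidiagonal.mem_antidiagonal] at h
    exact ⟨(i, j), by simp only [mem_product, mem_range]; omega, hne, by simp [h.2]⟩

theorem TensorProduct.lTensor_mul'_assoc_tmul {k A C : Type*} [CommRing k] [Ring A]
    [Algebra k A] [Ring C] [Algebra k C] (z : A ⊗[k] C) (d : C) :
    LinearMap.lTensor A (LinearMap.mul' k C) (TensorProduct.assoc k A C C (z ⊗ₜ d)) =
      LinearMap.lTensor A (LinearMap.mulRight k d) z := by
  induction z using TensorProduct.induction_on with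
  | zero => simp
  | tmul a e => simp
  | add z z' h h' => simp [add_tmul, h, h']

section gammaOf

variable {k A : Type*} [CommRing k] [Ring A] [Algebra k A] (γ1 : ℕ → Module.End k A)

theorem gammaOf_zero_apply (j : ℕ) (a : A) : gammaOf γ1 0 j a = if j = 0 then a else 0 := by
  simp only [gammaOf, if_true]
  split_ifs <;> rfl

theorem gammaOf_succ (r j : ℕ) :
    gammaOf γ1 (r + 1) j = ∑ pq ∈ antidiagonal j, γ1 pq.1 * gammaOf γ1 r pq.2 := by
  rw [gammaOf, if_neg r.succ_ne_zero, Nat.sum_antidiagonalTuple_succ]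
  refine sum_congr rfl fun pq _ => ?_
  rcases r with _ | r
  · rcases pq.2 with _ | q <;> simp [gammaOf]
  · rw [gammaOf, if_neg r.succ_ne_zero, mul_sum]
    simp [List.ofFn_succ]

theorem coeff_mk_pow_eq_gammaOf (r j : ℕ) :
    PowerSeries.coeff j (PowerSeries.mk γ1 ^ r) = gammaOf γ1 r j := by
  induction r generalizing j with
  | zero =>
    ext a
    rw [pow_zero, PowerSeries.coeff_one, gammaOf_zero_apply]
    split_ifs <;> rfl
  | succ r ih => simp [pow_succ', PowerSeries.coeff_mul, gammaOf_succ, ih]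

theorem gammaOf_add (r s j : ℕ) :
    gammaOf γ1 (r + s) j = ∑ pq ∈ antidiagonal j, gammaOf γ1 r pq.1 * gammaOf γ1 s pq.2 := by
  simp [← coeff_mk_pow_eq_gammaOf, pow_add, PowerSeries.coeff_mul]

variable {γ1} {n : ℕ}

theorem gammaOf_eq_zero_of_le (hγn : ∀ j < n, gammaOf γ1 n j = 0) {r j : ℕ} (hr : n ≤ r)
    (hj : j < n) : gammaOf γ1 r j = 0 := by
  obtain ⟨s, rfl⟩ := Nat.exists_eq_add_of_le hr
  rw [gammaOf_add]
  refine sum_eq_zero fun pq hpq => ?_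
  rw [HasAntidiagonal.mem_antidiagonal] at hpq
  rw [hγn pq.1 (by omega), zero_mul]

theorem gammaOf_mul_apply (hγn : ∀ j < n, gammaOf γ1 n j = 0)
    (hprod : ∀ j < n, ∀ a b : A, γ1 j (a * b) = ∑ i ∈ range n, γ1 i a * gammaOf γ1 i j b)
    (r : ℕ) {j : ℕ} (hj : j < n) (a b : A) :
    gammaOf γ1 r j (a * b) = ∑ i ∈ range n, gammaOf γ1 r i a * gammaOf γ1 i j b := by
  induction r generalizing j with
  | zero =>
    rw [sum_eq_single_of_mem 0 (mem_range.mpr (by omega)) fun i _ hi => by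
      rw [gammaOf_zero_apply, if_neg hi, zero_mul]]
    simp only [gammaOf_zero_apply, if_true, mul_ite, mul_zero]
  | succ r ih =>
    calc gammaOf γ1 (r + 1) j (a * b)
        = ∑ pq ∈ antidiagonal j, ∑ i ∈ range n, ∑ l ∈ range n,
            γ1 l (gammaOf γ1 r i a) * gammaOf γ1 l pq.1 (gammaOf γ1 i pq.2 b) := by
          rw [gammaOf_succ, LinearMap.sum_apply]
          refine sum_congr rfl fun pq hpq => ?_
          rw [HasAntidiagonal.mem_antidiagonal] at hpq
          rw [Module.End.mul_apply, ih (by omega), map_sum]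
          exact sum_congr rfl fun i _ => hprod _ (by omega) _ _
      _ = ∑ l ∈ range n, ∑ i ∈ range n, γ1 l (gammaOf γ1 r i a) * gammaOf γ1 (l + i) j b := by
          simp_rw [gammaOf_add, LinearMap.sum_apply, Module.End.mul_apply, mul_sum]
          rw [sum_comm]
          exact (sum_congr rfl fun i _ => sum_comm).trans sum_comm
      _ = ∑ m ∈ range n, ∑ p ∈ antidiagonal m,
            γ1 p.1 (gammaOf γ1 r p.2 a) * gammaOf γ1 (p.1 + p.2) j b :=
          sum_range_sum_range_eq_sum_antidiagonal _ fun l i h => by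
            rw [gammaOf_eq_zero_of_le hγn h hj, LinearMap.zero_apply, mul_zero]
      _ = ∑ m ∈ range n, gammaOf γ1 (r + 1) m a * gammaOf γ1 m j b := by
          refine sum_congr rfl fun m _ => ?_
          rw [gammaOf_succ, LinearMap.sum_apply, sum_mul]
          refine sum_congr rfl fun pq hpq => ?_
          rw [HasAntidiagonal.mem_antidiagonal.mp hpq, Module.End.mul_apply]

end gammaOf

section twistOp

variable {k A C : Type*} [CommRing k] [Ring A] [Algebra k A] [Ring C] [Algebra k C]

def twistOp (γ : ℕ → Module.End k A) (y : C) (n : ℕ) : Module.End k (A ⊗[k] C) :=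
  ∑ j ∈ range n, TensorProduct.map (γ j) (LinearMap.mulLeft k (y ^ j))

theorem twistOp_tmul (γ : ℕ → Module.End k A) (y : C) (n : ℕ) (a : A) (d : C) :
    twistOp γ y n (a ⊗ₜ d) = ∑ j ∈ range n, γ j a ⊗ₜ (y ^ j * d) := by
  simp [twistOp, LinearMap.sum_apply]

theorem commute_twistOp_lTensor_mulRight (γ : ℕ → Module.End k A) (y : C) (n : ℕ) (d : C) :
    Commute (twistOp γ y n) (LinearMap.lTensor A (LinearMap.mulRight k d)) :=
  TensorProduct.ext' fun a e => by simp [twistOp_tmul, mul_assoc]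

variable {γ1 : ℕ → Module.End k A} {y : C} {n : ℕ}

theorem twistOp_pow_tmul (hy : y ^ n = 0) (r : ℕ) (a : A) (d : C) :
    (twistOp γ1 y n ^ r) (a ⊗ₜ d) = ∑ j ∈ range n, gammaOf γ1 r j a ⊗ₜ (y ^ j * d) := by
  induction r with
  | zero =>
    simp_rw [gammaOf_zero_apply, ite_tmul, sum_ite_eq', mem_range, pow_zero, one_mul]
    split_ifs with hn
    · rfl
    · have : (1 : C) = 0 := by rwa [Nat.eq_zero_of_not_pos hn, pow_zero] at hy
      rw [← one_mul d, this, zero_mul, tmul_zero, map_zero]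
  | succ r ih =>
    calc (twistOp γ1 y n ^ (r + 1)) (a ⊗ₜ d)
        = ∑ i ∈ range n, ∑ j ∈ range n, γ1 i (gammaOf γ1 r j a) ⊗ₜ (y ^ (i + j) * d) := by
          rw [pow_succ', Module.End.mul_apply, ih, map_sum, sum_comm]
          simp [twistOp_tmul, pow_add, mul_assoc]
      _ = ∑ m ∈ range n, ∑ p ∈ antidiagonal m,
            γ1 p.1 (gammaOf γ1 r p.2 a) ⊗ₜ (y ^ (p.1 + p.2) * d) :=
          sum_range_sum_range_eq_sum_antidiagonal _ fun i j h => by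
            rw [pow_eq_zero_of_le h hy, zero_mul, tmul_zero]
      _ = ∑ m ∈ range n, gammaOf γ1 (r + 1) m a ⊗ₜ (y ^ m * d) := by
          refine sum_congr rfl fun m _ => ?_
          rw [gammaOf_succ, LinearMap.sum_apply, sum_tmul]
          refine sum_congr rfl fun pq hpq => ?_
          rw [HasAntidiagonal.mem_antidiagonal.mp hpq, Module.End.mul_apply]

theorem twistOp_pow_eq_zero (hy : y ^ n = 0) (hγn : ∀ j < n, gammaOf γ1 n j = 0) :
    twistOp γ1 y n ^ n = 0 :=
  TensorProduct.ext' fun a d => by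
    rw [twistOp_pow_tmul hy, LinearMap.zero_apply]
    exact sum_eq_zero fun j hj => by rw [hγn j (mem_range.mp hj), LinearMap.zero_apply, zero_tmul]

theorem twistOp_one_tmul (hy : y ^ n = 0) (hone : ∀ j < n, γ1 j 1 = if j = 1 then 1 else 0)
    (d : C) : twistOp γ1 y n (1 ⊗ₜ d) = 1 ⊗ₜ (y * d) := by
  rw [twistOp_tmul, sum_congr rfl fun j hj => by rw [hone j (mem_range.mp hj)]]
  simp_rw [ite_tmul, sum_ite_eq', mem_range, pow_one]
  split_ifs with hn
  · rfl
  · rw [← pow_one y, pow_eq_zero_of_le (by omega) hy, zero_mul, tmul_zero]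

theorem twistOp_pow_one_tmul (hy : y ^ n = 0)
    (hone : ∀ j < n, γ1 j 1 = if j = 1 then 1 else 0) (r : ℕ) (d : C) :
    (twistOp γ1 y n ^ r) (1 ⊗ₜ d) = 1 ⊗ₜ (y ^ r * d) := by
  induction r with
  | zero => rw [pow_zero, pow_zero, one_mul, Module.End.one_apply]
  | succ r ih => rw [pow_succ', Module.End.mul_apply, ih, twistOp_one_tmul hy hone, ← mul_assoc,
      ← pow_succ']

end twistOp

section TruncPoly

variable {k : Type*} [CommRing k] {n : ℕ}

theorem truncY_pow_eq_zero : truncY k n ^ n = 0 := by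
  rw [truncY, ← map_pow, Ideal.Quotient.eq_zero_iff_mem]
  exact Ideal.subset_span rfl

theorem span_range_truncY_pow : Submodule.span k (Set.range (truncY k n ^ ·)) = ⊤ := by
  refine eq_top_iff.mpr fun c _ => ?_
  obtain ⟨p, rfl⟩ := Ideal.Quotient.mk_surjective c
  have : Ideal.Quotient.mk _ p = Polynomial.aeval (truncY k n) p := by
    rw [truncY, ← Ideal.Quotient.mkₐ_eq_mk k, Polynomial.aeval_algHom_apply,
      Polynomial.aeval_X_left_apply]
  rw [this, Polynomial.aeval_eq_sum_range]
  exact Submodule.sum_mem _ fun i _ => Submodule.smul_mem _ _ (Submodule.subset_span ⟨i, rfl⟩)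

theorem TruncPoly.induction_on {P : TruncPoly k n → Prop} (c : TruncPoly k n)
    (pow : ∀ r, P (truncY k n ^ r)) (add : ∀ c c', P c → P c' → P (c + c'))
    (smul : ∀ (t : k) c, P c → P (t • c)) : P c := by
  have hc : c ∈ Submodule.span k (Set.range (truncY k n ^ ·)) := by
    rw [span_range_truncY_pow]
    exact Submodule.mem_top
  induction hc using Submodule.span_induction with
  | mem _ h => obtain ⟨r, rfl⟩ := h; exact pow r
  | zero => simpa using smul 0 _ (pow 0)
  | add c c' _ _ h h' => exact add c c' h h'
  | smul t c _ h => exact smul t c h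

variable {A : Type*} [Ring A] [Algebra k A] {γ1 : ℕ → Module.End k A}

noncomputable def twistAction (hγn : ∀ j < n, gammaOf γ1 n j = 0) :
    TruncPoly k n →ₐ[k] Module.End k (A ⊗[k] TruncPoly k n) :=
  Ideal.Quotient.liftₐ _ (Polynomial.aeval (twistOp γ1 (truncY k n) n)) fun p hp => by
    obtain ⟨q, rfl⟩ := Ideal.mem_span_singleton'.mp hp
    rw [map_mul, map_pow, Polynomial.aeval_X, twistOp_pow_eq_zero truncY_pow_eq_zero hγn, mul_zero]

variable (hγn : ∀ j < n, gammaOf γ1 n j = 0)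

theorem twistAction_truncY_pow (r : ℕ) :
    twistAction hγn (truncY k n ^ r) = twistOp γ1 (truncY k n) n ^ r := by
  rw [map_pow]
  congr 1
  change twistAction hγn (Ideal.Quotient.mkₐ k _ Polynomial.X) = _
  rw [twistAction, ← AlgHom.comp_apply, Ideal.Quotient.liftₐ_comp, Polynomial.aeval_X]

theorem commute_twistAction_lTensor_mulRight (c d : TruncPoly k n) :
    Commute (twistAction hγn c) (LinearMap.lTensor A (LinearMap.mulRight k d)) := by
  induction c using TruncPoly.induction_on with
  | pow r =>
    rw [twistAction_truncY_pow]
    exact (commute_twistOp_lTensor_mulRight _ _ _ d).pow_left r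
  | add c c' h h' => rw [map_add]; exact h.add_left h'
  | smul t c h => rw [map_smul]; exact h.smul_left t

noncomputable def twistingMap : TruncPoly k n ⊗[k] A →ₗ[k] A ⊗[k] TruncPoly k n :=
  TensorProduct.lift <|
    LinearMap.lcomp k _ ((TensorProduct.mk k A _).flip 1) ∘ₗ (twistAction hγn).toLinearMap

theorem twistingMap_tmul (c : TruncPoly k n) (a : A) :
    twistingMap hγn (c ⊗ₜ a) = twistAction hγn c (a ⊗ₜ 1) := rfl

theorem twistingMap_truncY_pow_tmul (r : ℕ) (a : A) :
    twistingMap hγn ((truncY k n ^ r) ⊗ₜ a) =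
      ∑ j ∈ range n, gammaOf γ1 r j a ⊗ₜ (truncY k n ^ j) := by
  simp_rw [twistingMap_tmul, twistAction_truncY_pow, twistOp_pow_tmul truncY_pow_eq_zero, mul_one]

theorem twistingMap_one_tmul (a : A) : twistingMap hγn (1 ⊗ₜ a) = a ⊗ₜ 1 := by
  rw [twistingMap_tmul, map_one, Module.End.one_apply]

theorem twistingMap_tmul_one (hone : ∀ j < n, γ1 j 1 = if j = 1 then 1 else 0)
    (c : TruncPoly k n) : twistingMap hγn (c ⊗ₜ (1 : A)) = 1 ⊗ₜ c := by
  induction c using TruncPoly.induction_on with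
  | pow r =>
    rw [twistingMap_tmul, twistAction_truncY_pow, twistOp_pow_one_tmul truncY_pow_eq_zero hone,
      mul_one]
  | add c c' h h' => rw [add_tmul, map_add, h, h', tmul_add]
  | smul t c h => rw [← smul_tmul', map_smul, h, tmul_smul]

theorem twistingMap_mul_tmul (c c' : TruncPoly k n) (a : A) :
    twistingMap hγn ((c * c') ⊗ₜ a) =
      LinearMap.lTensor A (LinearMap.mul' k _) (TensorProduct.assoc k A _ _
        (LinearMap.rTensor _ (twistingMap hγn)
          ((TensorProduct.assoc k _ A _).symm (c ⊗ₜ twistingMap hγn (c' ⊗ₜ a))))) := by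
  rw [twistingMap_tmul, map_mul, Module.End.mul_apply, ← twistingMap_tmul]
  generalize twistingMap hγn (c' ⊗ₜ a) = x
  induction x using TensorProduct.induction_on with
  | zero => simp
  | tmul b d =>
    have := LinearMap.congr_fun (commute_twistAction_lTensor_mulRight hγn c d).eq (b ⊗ₜ 1)
    simp_all [twistingMap_tmul, TensorProduct.lTensor_mul'_assoc_tmul]
  | add x x' h h' => simp [tmul_add, h, h']

theorem twistingMap_tmul_mul
    (hprod : ∀ j < n, ∀ a b : A, γ1 j (a * b) = ∑ i ∈ range n, γ1 i a * gammaOf γ1 i j b)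
    (c : TruncPoly k n) (a a' : A) :
    twistingMap hγn (c ⊗ₜ (a * a')) =
      LinearMap.rTensor _ (LinearMap.mul' k A) ((TensorProduct.assoc k A A _).symm
        (LinearMap.lTensor A (twistingMap hγn) (TensorProduct.assoc k A _ A
          (LinearMap.rTensor A (twistingMap hγn) ((c ⊗ₜ a) ⊗ₜ a'))))) := by
  induction c using TruncPoly.induction_on with
  | pow r =>
    simp only [LinearMap.rTensor_tmul, twistingMap_truncY_pow_tmul, sum_tmul, map_sum, assoc_tmul,
      LinearMap.lTensor_tmul, tmul_sum, assoc_symm_tmul, LinearMap.mul'_apply]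
    rw [sum_comm]
    exact sum_congr rfl fun j hj => by
      rw [gammaOf_mul_apply hγn hprod r (mem_range.mp hj), sum_tmul]
  | add c c' h h' => simp only [add_tmul, map_add, h, h']
  | smul t c h => simp only [← smul_tmul', map_smul, h]

end TruncPoly

theorem statement4_general {k A : Type*} [CommRing k] [Ring A] [Algebra k A] (n : ℕ)
    (γ1 : ℕ → Module.End k A)
    (hone : ∀ j < n, γ1 j 1 = if j = 1 then 1 else 0)
    (hγn : ∀ j < n, gammaOf γ1 n j = 0)
    (hprod : ∀ j < n, ∀ a b : A,
      γ1 j (a * b) = ∑ i ∈ Finset.range n, γ1 i a * gammaOf γ1 i j b) :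
    ∃ s : TruncPoly k n ⊗[k] A →ₗ[k] A ⊗[k] TruncPoly k n,
      (∀ r < n, ∀ a : A,
        s (((truncY k n) ^ r) ⊗ₜ[k] a) =
          ∑ j ∈ Finset.range n, gammaOf γ1 r j a ⊗ₜ[k] ((truncY k n) ^ j)) ∧
      IsTwistingMap k A (TruncPoly k n) s :=
  ⟨twistingMap hγn, fun r _ => twistingMap_truncY_pow_tmul hγn r, twistingMap_one_tmul hγn,
    twistingMap_tmul_one hγn hone, twistingMap_mul_tmul hγn, twistingMap_tmul_mul hγn hprod⟩

/-- If `γ^1_j(1) = δ_{1j}`, `γ^n_j = 0` for `j < n`, and the `γ^1_j` satisfy the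
Product law, then the formula `s(y^r ⊗ a) = Σ_j γ^r_j(a) ⊗ y^j` defines a twisting
map `k[y]/⟨y^n⟩ ⊗ A → A ⊗ k[y]/⟨y^n⟩`. -/
theorem statement4 {k A : Type*} [CommRing k] [Ring A] [Algebra k A] (n : ℕ)
    (hn : 0 < n) (γ1 : ℕ → Module.End k A)
    (hone : ∀ j < n, γ1 j 1 = if j = 1 then 1 else 0)
    (hγn : ∀ j < n, gammaOf γ1 n j = 0)
    (hprod : ∀ j < n, ∀ a b : A,
      γ1 j (a * b) = ∑ i ∈ Finset.range n, γ1 i a * gammaOf γ1 i j b) :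
    ∃ s : TruncPoly k n ⊗[k] A →ₗ[k] A ⊗[k] TruncPoly k n,
      (∀ r < n, ∀ a : A,
        s (((truncY k n) ^ r) ⊗ₜ[k] a) =
          ∑ j ∈ Finset.range n, gammaOf γ1 r j a ⊗ₜ[k] ((truncY k n) ^ j)) ∧
      IsTwistingMap k A (TruncPoly k n) s :=
  statement4_general n γ1 hone hγn hprod
end

section
/- Under the hypotheses of the previous lemma (Composition law, γ^h_0 = 0, q = γ^{h-1}_0(x) right cancelable, and the product formula for γ^h_0), for each 0 < l ≤ ⌊n/h⌋, every map γ^i_j with i ≥ lh and j < lh vanishes. -/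
/-!
Splitting `γ^i_j` through the composition law as `Σ_p γ^h_p ∘ γ^{i-h}_{j-p}` reduces the claim,
by induction on `l`, to the vanishing of `γ^h_p` for `p < h`. That case is proved by strong
induction on `p`: with `d = h - 1 - p`, the product formula applied to `a * γ^d_0(x)` has the single
surviving term `γ^h_p(a) q` (below `p` by induction, above `p` because `γ^i_0 ∘ γ^d_0 = γ^{i+d}_0`
vanishes once `i + d ≥ h`), while its left side is `γ^h_0(a γ^d_0(x)) = 0`; cancelling `q` gives
`γ^h_p(a) = 0`.
-/

section

variable {R M : Type*} [Semiring R] [AddCommMonoid M] [Module R M]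

def CompositionLaw (n : ℕ) (γ : ℕ → ℕ → Module.End R M) : Prop :=
  ∀ r j i, j < n → i ≤ r → γ r j = ∑ l ∈ Finset.range (j + 1), γ i l * γ (r - i) (j - l)

namespace CompositionLaw

variable {n : ℕ} {γ : ℕ → ℕ → Module.End R M}

theorem mul_index_zero (hcomp : CompositionLaw n γ) (hn : 0 < n) (i d : ℕ) :
    γ i 0 * γ d 0 = γ (i + d) 0 := by
  simpa using (hcomp (i + d) 0 i hn (Nat.le_add_right i d)).symm

theorem index_zero_eq_zero_of_le {h r : ℕ} (hcomp : CompositionLaw n γ) (hn : 0 < n)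
    (hγh : γ h 0 = 0) (hr : h ≤ r) : γ r 0 = 0 := by
  obtain ⟨d, rfl⟩ := Nat.exists_eq_add_of_le hr
  rw [← hcomp.mul_index_zero hn, hγh, zero_mul]

theorem eq_zero_of_mul_le {h : ℕ} (hcomp : CompositionLaw n γ) (hlow : ∀ p < h, γ h p = 0) :
    ∀ l, l * h ≤ n → ∀ i j, l * h ≤ i → j < l * h → γ i j = 0 := by
  intro l
  induction l with
  | zero => intro _ i j _ hj; omega
  | succ l ih =>
    intro hln i j hi hj
    rw [Nat.succ_mul] at hln hi hj
    rw [hcomp i j h (by omega) (by omega)]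
    refine Finset.sum_eq_zero fun p hp => ?_
    rw [Finset.mem_range] at hp
    rcases lt_or_ge p h with hph | hph
    · rw [hlow p hph, zero_mul]
    · rw [ih (by omega) (i - h) (j - p) (by omega) (by omega), mul_zero]

end CompositionLaw

end

theorem CompositionLaw.eq_zero_of_lt {k A : Type*} [CommRing k] [Ring A] [Algebra k A]
    {n h : ℕ} {γ : ℕ → ℕ → Module.End k A} (hcomp : CompositionLaw n γ) (hhn : h ≤ n)
    (hγh : γ h 0 = 0) {x : A}
    (hq : ∀ a a' : A, a * γ (h - 1) 0 x = a' * γ (h - 1) 0 x → a = a')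
    (hprod : ∀ a a' : A, γ h 0 (a * a') = ∑ i ∈ Finset.range n, γ h i a * γ i 0 a') :
    ∀ j < h, γ h j = 0 := by
  intro j
  induction j using Nat.strong_induction_on with
  | _ j ih =>
  intro hj
  have hn : 0 < n := by omega
  ext a
  set d := h - 1 - j
  have hsingle : γ h 0 (a * γ d 0 x) = γ h j a * γ (h - 1) 0 x := by
    rw [hprod, Finset.sum_eq_single_of_mem j (Finset.mem_range.2 (by omega))]
    · rw [← Module.End.mul_apply, hcomp.mul_index_zero hn, show j + d = h - 1 by omega]
    · intro i _ hij
      rcases hij.lt_or_gt with hlt | hgt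
      · rw [ih i hlt (by omega), LinearMap.zero_apply, zero_mul]
      · rw [← Module.End.mul_apply, hcomp.mul_index_zero hn,
          hcomp.index_zero_eq_zero_of_le hn hγh (by omega), LinearMap.zero_apply, mul_zero]
  apply hq
  rw [← hsingle, hγh, LinearMap.zero_apply, LinearMap.zero_apply, zero_mul]

theorem statement9_general {k A : Type*} [CommRing k] [Ring A] [Algebra k A] (n h : ℕ)
    (γ : ℕ → ℕ → Module.End k A)
    (hcomp : ∀ r j i, j < n → i ≤ r →
      γ r j = ∑ l ∈ Finset.range (j + 1), γ i l * γ (r - i) (j - l))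
    (hhn : h ≤ n) (x : A)
    (hγh : γ h 0 = 0)
    (hq : ∀ a a' : A, a * γ (h - 1) 0 x = a' * γ (h - 1) 0 x → a = a')
    (hprod : ∀ a a' : A,
      γ h 0 (a * a') = ∑ i ∈ Finset.range n, γ h i a * γ i 0 a') :
    ∀ l, 0 < l → l ≤ n / h → ∀ i j, l * h ≤ i → j < l * h → γ i j = 0 := by
  intro l _ hl
  have hcomp : CompositionLaw n γ := hcomp
  exact hcomp.eq_zero_of_mul_le (hcomp.eq_zero_of_lt hhn hγh hq hprod) l
    ((Nat.mul_le_mul_right h hl).trans (Nat.div_mul_le_self n h))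

/-- Under the hypotheses of the previous lemma (Composition law, `γ^h_0 = 0`,
`q = γ^{h-1}_0(x)` right cancelable, product formula for `γ^h_0`), for each
`0 < l ≤ ⌊n/h⌋` every map `γ^i_j` with `i ≥ lh` and `j < lh` vanishes. -/
theorem statement9 {k A : Type*} [CommRing k] [Ring A] [Algebra k A] (n h : ℕ)
    (γ : ℕ → ℕ → Module.End k A)
    (hγ0 : ∀ j, γ 0 j = if j = 0 then 1 else 0)
    (hcomp : ∀ r j i, j < n → i ≤ r →
      γ r j = ∑ l ∈ Finset.range (j + 1), γ i l * γ (r - i) (j - l))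
    (hh1 : 1 ≤ h) (hhn : h ≤ n) (x : A)
    (hγh : γ h 0 = 0)
    (hq : ∀ a a' : A, a * γ (h - 1) 0 x = a' * γ (h - 1) 0 x → a = a')
    (hprod : ∀ a a' : A,
      γ h 0 (a * a') = ∑ i ∈ Finset.range n, γ h i a * γ i 0 a') :
    ∀ l, 0 < l → l ≤ n / h → ∀ i j, l * h ≤ i → j < l * h → γ i j = 0 :=
  statement9_general n h γ hcomp hhn x hγh hq hprod
end

section
/- Under the same hypotheses (twisting map s with γ^h_0 = 0, γ^{h-1}_0(x) right cancelable, γ^1_0 a B-bimodule map, B = ker γ^1_0), each map γ^i_j : A → A with 0 ≤ i,j < h is both left and right B-linear: γ^i_j(ba) = bγ^i_j(a) and γ^i_j(ab) = γ^i_j(a)b for a ∈ A, b ∈ B. -/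
/-!
Write `D = γ^1_0`. The Composition law gives `γ^m_0 = D^m`, so `D^h = 0`, and the Product law
evaluated at `u · γ^p_0(x)` reads `D(u · γ^p_0(x)) = Σ_i γ^1_i(u) · γ^{p+i}_0(x)`. As `p` runs
down from `h - 1`, this is a triangular system in the unknowns `γ^1_j(u)`, `j < h`, whose diagonal
coefficient `γ^{h-1}_0(x)` is right cancelable. For `b ∈ B` the map `D` is left `B`-linear, and
solving the system gives `γ^1_j(b) = δ_{1j} b` and `γ^1_j(ba) = b γ^1_j(a)`. The Composition law
propagates the first identity to `γ^i_j(b) = δ_{ij} b`, and then the Product law makes `γ^1_j`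
right `B`-linear. Finally the Composition law puts every `γ^i_j`, `j < h`, in the subsemiring
generated by the `γ^1_l`, `l < h`, all of which commute with left and right multiplication by `b`.
-/

/-- The conditions on a family `γ^r_j` of `k`-linear endomorphisms of `A` that are
equivalent to the associated map `s(y^r ⊗ a) = Σ_j γ^r_j(a) ⊗ y^j` being a twisting
map `k[y]/⟨y^n⟩ ⊗ A → A ⊗ k[y]/⟨y^n⟩`: vanishing for `r ≥ n`, `γ^0_j = δ_{0j}·id`,
`γ^1_j(1) = δ_{1j}`, the Product law for `γ^1_j`, and the recursive Composition
law. -/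
def IsTwistingFamily (k A : Type*) [CommRing k] [Ring A] [Algebra k A] (n : ℕ)
    (γ : ℕ → ℕ → Module.End k A) : Prop :=
  (∀ r j, n ≤ r → j < n → γ r j = 0) ∧
  (∀ j < n, γ 0 j = if j = 0 then 1 else 0) ∧
  (∀ j < n, γ 1 j 1 = if j = 1 then 1 else 0) ∧
  (∀ j < n, ∀ a b : A,
    γ 1 j (a * b) = ∑ i ∈ Finset.range n, γ 1 i a * γ i j b) ∧
  (∀ r j, 1 < r → j < n →
    γ r j = ∑ l ∈ Finset.range (j + 1), γ 1 l * γ (r - 1) (j - l))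

open Finset

theorem eq_of_forall_sum_mul_shift_eq {A : Type*} [NonUnitalNonAssocRing A] {n h : ℕ}
    (hhn : h ≤ n) {c : ℕ → A} (hc : ∀ q, h ≤ q → c q = 0) (hreg : IsRightRegular (c (h - 1)))
    {f g : ℕ → A}
    (hfg : ∀ p, ∑ i ∈ range n, f i * c (p + i) = ∑ i ∈ range n, g i * c (p + i))
    {j : ℕ} (hj : j < h) : f j = g j := by
  induction j using Nat.strong_induction_on with
  | _ j ih =>
  have hjn : j ∈ range n := mem_range.2 (by omega)
  have hoff : ∀ i ∈ (range n).erase j,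
      f i * c (h - 1 - j + i) = g i * c (h - 1 - j + i) := by
    intro i hi
    rcases lt_or_gt_of_ne (ne_of_mem_erase hi) with hlt | hgt
    · rw [ih i hlt (hlt.trans hj)]
    · rw [hc _ (by omega), mul_zero, mul_zero]
  have hdiag := hfg (h - 1 - j)
  rw [← add_sum_erase _ _ hjn, ← add_sum_erase _ _ hjn, sum_congr rfl hoff,
    Nat.sub_add_cancel (by omega)] at hdiag
  exact hreg (add_right_cancel hdiag)

theorem mem_centralizer_mulLeft_mulRight_iff {k A : Type*} [CommSemiring k] [Semiring A]
    [Algebra k A] {f : Module.End k A} {b : A} :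
    f ∈ Subsemiring.centralizer {LinearMap.mulLeft k b, LinearMap.mulRight k b} ↔
      ∀ a, f (b * a) = b * f a ∧ f (a * b) = f a * b := by
  simp only [Subsemiring.mem_centralizer_iff, Set.mem_insert_iff, Set.mem_singleton_iff,
    forall_eq_or_imp, forall_eq]
  simp only [LinearMap.ext_iff, Module.End.mul_apply, LinearMap.mulLeft_apply,
    LinearMap.mulRight_apply, ← forall_and]
  exact forall_congr' fun a => and_congr eq_comm eq_comm

namespace IsTwistingFamily

variable {k A : Type*} [CommRing k] [Ring A] [Algebra k A] {n : ℕ}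
  {γ : ℕ → ℕ → Module.End k A}

theorem gamma_zero_eq_pow (hγ : IsTwistingFamily k A n γ) (hn : 0 < n) (m : ℕ) :
    γ m 0 = γ 1 0 ^ m := by
  obtain ⟨-, hγ0, -, -, hcomp⟩ := hγ
  induction m with
  | zero => simp [hγ0 0 hn]
  | succ m ih =>
    rcases Nat.eq_zero_or_pos m with rfl | hm
    · simp
    · simp [hcomp (m + 1) 0 (by omega) hn, ih, pow_succ']

theorem gamma_zero_mul_gamma_zero (hγ : IsTwistingFamily k A n γ) (hn : 0 < n) (i p : ℕ) :
    γ i 0 * γ p 0 = γ (i + p) 0 := by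
  rw [hγ.gamma_zero_eq_pow hn (i + p), pow_add, ← hγ.gamma_zero_eq_pow hn i,
    ← hγ.gamma_zero_eq_pow hn p]

theorem gamma_zero_eq_zero_of_le (hγ : IsTwistingFamily k A n γ) (hn : 0 < n) {h q : ℕ}
    (hh : γ h 0 = 0) (hq : h ≤ q) : γ q 0 = 0 := by
  rw [hγ.gamma_zero_eq_pow hn q]
  exact pow_eq_zero_of_le hq (hγ.gamma_zero_eq_pow hn h ▸ hh)

theorem gamma_one_zero_one (hγ : IsTwistingFamily k A n γ) (hn : 0 < n) : γ 1 0 1 = 0 := by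
  simpa using hγ.2.2.1 0 hn

theorem gamma_one_zero_mul_gamma_zero_apply (hγ : IsTwistingFamily k A n γ) (hn : 0 < n)
    (u v : A) (p : ℕ) : γ 1 0 (u * γ p 0 v) = ∑ i ∈ range n, γ 1 i u * γ (p + i) 0 v := by
  rw [hγ.2.2.2.1 0 hn]
  refine sum_congr rfl fun i _ => ?_
  rw [← Module.End.mul_apply, hγ.gamma_zero_mul_gamma_zero hn, add_comm]

theorem gamma_apply_eq_ite (hγ : IsTwistingFamily k A n γ) {m : ℕ} (hm : m ≤ n) {b : A}
    (hb : ∀ l < m, γ 1 l b = if l = 1 then b else 0) (i : ℕ) {j : ℕ} (hj : j < m) :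
    γ i j b = if i = j then b else 0 := by
  obtain ⟨-, hγ0, -, -, hcomp⟩ := hγ
  induction i generalizing j with
  | zero =>
    rw [hγ0 j (by omega)]
    rcases eq_or_ne j 0 with rfl | hj0
    · simp
    · simp [hj0, hj0.symm]
  | succ i ih =>
    rcases Nat.eq_zero_or_pos i with rfl | hi
    · simpa [eq_comm] using hb j hj
    rw [hcomp (i + 1) j (by omega) (by omega), LinearMap.sum_apply]
    calc ∑ l ∈ range (j + 1), (γ 1 l * γ (i + 1 - 1) (j - l)) b
        = ∑ l ∈ range (j + 1), if l = 1 then (if i + 1 = j then b else 0) else 0 := by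
          refine sum_congr rfl fun l hl => ?_
          have hl := mem_range.1 hl
          rw [Module.End.mul_apply, Nat.add_sub_cancel, ih (by omega)]
          rcases eq_or_ne i (j - l) with hil | hil
          · rw [if_pos hil, hb l (by omega)]
            split_ifs <;> first | rfl | omega
          · rw [if_neg hil, map_zero]
            split_ifs <;> first | rfl | omega
      _ = if i + 1 = j then b else 0 := by
          rw [sum_ite_eq']
          split_ifs with h1j <;> first | rfl | (rw [mem_range] at h1j; omega)

theorem gamma_one_mul_right (hγ : IsTwistingFamily k A n γ) {m : ℕ} (hm : m ≤ n) {b : A}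
    (hb : ∀ l < m, γ 1 l b = if l = 1 then b else 0) (a : A) {j : ℕ} (hj : j < m) :
    γ 1 j (a * b) = γ 1 j a * b := by
  rw [hγ.2.2.2.1 j (by omega)]
  simp [hγ.gamma_apply_eq_ite hm hb _ hj, mul_ite, hj.trans_le hm]

theorem gamma_mem_of_gamma_one_mem (hγ : IsTwistingFamily k A n γ) {m : ℕ} (hm : m ≤ n)
    (S : Subsemiring (Module.End k A)) (hS : ∀ l < m, γ 1 l ∈ S) (i : ℕ) {j : ℕ} (hj : j < m) :
    γ i j ∈ S := by
  obtain ⟨-, hγ0, -, -, hcomp⟩ := hγ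
  induction i generalizing j with
  | zero =>
    rw [hγ0 j (by omega)]
    split_ifs
    exacts [S.one_mem, S.zero_mem]
  | succ i ih =>
    rcases Nat.eq_zero_or_pos i with rfl | hi
    · exact hS j hj
    rw [hcomp (i + 1) j (by omega) (by omega)]
    exact sum_mem fun l hl => mul_mem (hS l (by simp at hl; omega)) (ih (by omega))

theorem gamma_one_apply_eq_ite (hγ : IsTwistingFamily k A n γ) {h : ℕ} (hhn : h ≤ n)
    (h1n : 1 < n) (hh : γ h 0 = 0) {x : A} (hx : IsRightRegular (γ (h - 1) 0 x)) {b : A}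
    (hb : ∀ a, γ 1 0 (b * a) = b * γ 1 0 a) {j : ℕ} (hj : j < h) :
    γ 1 j b = if j = 1 then b else 0 := by
  have hn : 0 < n := by omega
  refine eq_of_forall_sum_mul_shift_eq hhn (c := fun p => γ p 0 x)
    (f := fun j => γ 1 j b) (g := fun j => if j = 1 then b else 0)
    (fun q hq => by simp [hγ.gamma_zero_eq_zero_of_le hn hh hq]) hx (fun p => ?_) hj
  calc ∑ i ∈ range n, γ 1 i b * γ (p + i) 0 x
      = γ 1 0 (b * γ p 0 x) := (hγ.gamma_one_zero_mul_gamma_zero_apply hn b x p).symm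
    _ = b * γ (p + 1) 0 x := by
        rw [hb, ← Module.End.mul_apply, hγ.gamma_zero_mul_gamma_zero hn, add_comm]
    _ = ∑ i ∈ range n, (if i = 1 then b else 0) * γ (p + i) 0 x := by
        simp [ite_mul, h1n]

theorem gamma_one_mul_left (hγ : IsTwistingFamily k A n γ) {h : ℕ} (hhn : h ≤ n)
    (hh : γ h 0 = 0) {x : A} (hx : IsRightRegular (γ (h - 1) 0 x)) {b : A}
    (hb : ∀ a, γ 1 0 (b * a) = b * γ 1 0 a) (a : A) {j : ℕ} (hj : j < h) :
    γ 1 j (b * a) = b * γ 1 j a := by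
  have hn : 0 < n := by omega
  refine eq_of_forall_sum_mul_shift_eq hhn (c := fun p => γ p 0 x)
    (f := fun j => γ 1 j (b * a)) (g := fun j => b * γ 1 j a)
    (fun q hq => by simp [hγ.gamma_zero_eq_zero_of_le hn hh hq]) hx (fun p => ?_) hj
  calc ∑ i ∈ range n, γ 1 i (b * a) * γ (p + i) 0 x
      = γ 1 0 (b * a * γ p 0 x) := (hγ.gamma_one_zero_mul_gamma_zero_apply hn _ x p).symm
    _ = b * γ 1 0 (a * γ p 0 x) := by rw [mul_assoc, hb]
    _ = ∑ i ∈ range n, b * γ 1 i a * γ (p + i) 0 x := by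
        rw [hγ.gamma_one_zero_mul_gamma_zero_apply hn, mul_sum]
        simp only [mul_assoc]

end IsTwistingFamily

/-- Under the same hypotheses as before (twisting map with `γ^h_0 = 0`,
`γ^{h-1}_0(x)` right cancelable, `γ^1_0` a `B`-bimodule map, `B = ker γ^1_0`),
each map `γ^i_j` with `0 ≤ i,j < h` is both left and right `B`-linear. -/
theorem statement13 {k A : Type*} [CommRing k] [Ring A] [Algebra k A] (n h : ℕ)
    (γ : ℕ → ℕ → Module.End k A)
    (hγ : IsTwistingFamily k A n γ)
    (hh1 : 1 < h) (hhn : h ≤ n) (x : A)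
    (hγh : γ h 0 = 0)
    (hq : ∀ a a' : A, a * γ (h - 1) 0 x = a' * γ (h - 1) 0 x → a = a')
    (hbimod : ∀ (a b b' : A), γ 1 0 b = 0 → γ 1 0 b' = 0 →
      γ 1 0 (b * a * b') = b * γ 1 0 a * b') :
    ∀ i < h, ∀ j < h, ∀ (a b : A), γ 1 0 b = 0 →
      γ i j (b * a) = b * γ i j a ∧ γ i j (a * b) = γ i j a * b := by
  intro i _ j hj a b hb
  have h1 : γ 1 0 1 = 0 := hγ.gamma_one_zero_one (by omega)
  have hb_left : ∀ a, γ 1 0 (b * a) = b * γ 1 0 a := fun a => by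
    simpa using hbimod a b 1 hb h1
  have hb_apply : ∀ l < h, γ 1 l b = if l = 1 then b else 0 := fun l hl =>
    hγ.gamma_one_apply_eq_ite hhn (by omega) hγh hq hb_left hl
  have hS : ∀ l < h, γ 1 l ∈ Subsemiring.centralizer
      {LinearMap.mulLeft k b, LinearMap.mulRight k b} := fun l hl =>
    mem_centralizer_mulLeft_mulRight_iff.2 fun a =>
      ⟨hγ.gamma_one_mul_left hhn hγh hq hb_left a hl, hγ.gamma_one_mul_right hhn hb_apply a hl⟩
  exact mem_centralizer_mulLeft_mulRight_iff.1 (hγ.gamma_mem_of_gamma_one_mem hhn _ hS i hj) a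
end
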